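/- arXiv:0902.1865 — 4 statements merged into one kernel-verified Lean document; each statement's English description precedes it below -/
import Mathlib

section
/- Let E be a metrizable topological vector space over ℝ, let (x_n) be a sequence in E converging to x ∈ E. Then there exists a strictly monotone map φ : ℕ → ℕ such that the subsequence (x_{φ(k)}) converges fast to x, i.e. for every l ∈ ℕ the sequence k ↦ k^l • (x_{φ(k)} − x) tends to 0 in E as k → ∞. -/
open Filter Topology

theorem Filter.exists_strictMono_tendsto_diagonal {α : Type*} {l : Filter α}
    [l.IsCountablyGenerated] {f : ℕ → ℕ → α} (hf : ∀ k, Tendsto (f k) atTop l) :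
    ∃ φ : ℕ → ℕ, StrictMono φ ∧ Tendsto (fun k => f k (φ k)) atTop l := by
  obtain ⟨V, hV⟩ := l.exists_antitone_basis
  obtain ⟨φ, hφ, hmem⟩ :=
    extraction_forall_of_eventually fun k => (hf k).eventually (hV.mem k)
  exact ⟨φ, hφ, hV.tendsto hmem⟩

theorem Filter.Tendsto.smul_of_eventually_norm_le_one {ι 𝕜 E : Type*} [NormedDivisionRing 𝕜]
    [NeBot (𝓝[≠] (0 : 𝕜))] [AddCommGroup E] [Module 𝕜 E] [TopologicalSpace E]
    [ContinuousSMul 𝕜 E]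
    {l : Filter ι} {c : ι → 𝕜} {v : ι → E} (hv : Tendsto v l (𝓝 0))
    (hc : ∀ᶠ i in l, ‖c i‖ ≤ 1) : Tendsto (fun i => c i • v i) l (𝓝 0) := by
  rw [(nhds_basis_balanced 𝕜 E).tendsto_right_iff]
  rintro W ⟨hW, hWbal⟩
  filter_upwards [hc, hv hW] with i hci hvi
  exact hWbal.smul_mem hci hvi

theorem eventually_norm_pow_div_pow_self_le_one (l : ℕ) :
    ∀ᶠ k : ℕ in atTop, ‖(k : ℝ) ^ l / (k : ℝ) ^ k‖ ≤ 1 := by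
  filter_upwards [eventually_ge_atTop l, eventually_ge_atTop 1] with k hkl hk1
  have hk1' : (1 : ℝ) ≤ k := by exact_mod_cast hk1
  rw [Real.norm_of_nonneg (by positivity)]
  exact div_le_one_of_le₀ (pow_le_pow_right₀ hk1' hkl) (by positivity)

/-- Choose the subsequence so that `k ^ k • (x (φ k) - x₀) → 0`; for `k ≥ l` the factor `k ^ l`
is the bounded multiple `k ^ l / k ^ k` of `k ^ k`. -/
theorem exists_fast_converging_subsequence
    {E : Type*} [AddCommGroup E] [Module ℝ E] [TopologicalSpace E]
    [IsTopologicalAddGroup E] [ContinuousSMul ℝ E]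
    [TopologicalSpace.MetrizableSpace E]
    (x : ℕ → E) (x₀ : E) (hx : Tendsto x atTop (𝓝 x₀)) :
    ∃ φ : ℕ → ℕ, StrictMono φ ∧
      ∀ l : ℕ, Tendsto (fun k : ℕ => ((k : ℝ) ^ l) • (x (φ k) - x₀)) atTop (𝓝 0) := by
  have hrows : ∀ k : ℕ, Tendsto (fun n => ((k : ℝ) ^ k) • (x n - x₀)) atTop (𝓝 0) := fun k => by
    simpa using (hx.sub_const x₀).const_smul ((k : ℝ) ^ k)
  obtain ⟨φ, hφ, hdiag⟩ := exists_strictMono_tendsto_diagonal hrows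
  refine ⟨φ, hφ, fun l => ?_⟩
  refine (hdiag.smul_of_eventually_norm_le_one
    (eventually_norm_pow_div_pow_self_le_one l)).congr' ?_
  filter_upwards [eventually_ge_atTop 1] with k hk
  have hk_pow : (k : ℝ) ^ k ≠ 0 := pow_ne_zero _ (by exact_mod_cast (by omega : k ≠ 0))
  rw [smul_smul, div_mul_cancel₀ _ hk_pow]
end

section
/- Let E and F be real vector spaces, let (F_λ)_{λ∈Λ} be a family of Hausdorff topological real vector spaces, let f : E → F be linear and let g_λ : F → F_λ be a family of linear maps which is point separating on F (for every y ∈ F with y ≠ 0 there is some λ with g_λ(y) ≠ 0). Let B ⊆ E be a balanced convex set such that: (a) for every x in the ℝ-linear span of B, gauge B x = 0 implies x = 0; (b) every sequence (x_n) in span_ℝ B which is Cauchy for gauge B (i.e. for every ε > 0 there is N with gauge B (x_m − x_n) < ε for all m, n ≥ N) has a limit x ∈ span_ℝ B with gauge B (x_n − x) → 0. Assume moreover that for every λ the set g_λ(f(B)) is von Neumann bounded in F_λ. Then the image set f(B) has the same two properties in F: (a') for every y ∈ span_ℝ (f(B)), gauge (f(B)) y = 0 implies y = 0, and (b') every sequence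 in span_ℝ (f(B)) which is Cauchy for gauge (f(B)) converges, with respect to gauge (f(B)), to an element of span_ℝ (f(B)). In other words, if (E_B, p_B) is a Banach space and each (g_λ ∘ f)(B) is bounded, then (F_{f(B)}, p_{f(B)}) is a Banach space. -/
/-!
If `gauge (f '' B) y = 0`, then `y ∈ ε • f '' B` for every `ε > 0`, so each `g l y` lies in
`ε • g l '' (f '' B)` for every `ε`; boundedness of that set forces `g l y = 0`, and the `g l`
separate points.

To prove completeness: a gauge-Cauchy sequence `u` in `span (f '' B)` has a subsequence whose
increments lie in `(1/2)^k • f '' B`. Lifting the increments to `(1/2)^k • B` gives a series that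
is gauge-Cauchy in `span B`; `f` maps its limit `x` to a limit of the subsequence because `f`
does not increase gauges, and a Cauchy sequence with a convergent subsequence converges.
-/

open Filter Topology Pointwise

section Gauge

variable {E F : Type*} [AddCommGroup E] [Module ℝ E] [AddCommGroup F] [Module ℝ F]
  {B : Set E}

def GaugeCauchySeq (B : Set E) (u : ℕ → E) : Prop :=
  ∀ ε > 0, ∃ N : ℕ, ∀ m ≥ N, ∀ n ≥ N, gauge B (u m - u n) < ε

def IsGaugeComplete (B : Set E) : Prop :=
  ∀ u : ℕ → E, (∀ n, u n ∈ Submodule.span ℝ B) → GaugeCauchySeq B u →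
    ∃ x ∈ Submodule.span ℝ B, Tendsto (fun n => gauge B (u n - x)) atTop (𝓝 0)

theorem Balanced.linear_image (hbal : Balanced ℝ B) (f : E →ₗ[ℝ] F) : Balanced ℝ (f '' B) :=
  fun a ha => by
    rw [← image_smul_set]
    exact Set.image_mono (hbal a ha)

theorem Convex.sum_mem_smul (hconv : Convex ℝ B) (h0 : (0 : E) ∈ B) {ι : Type*} (s : Finset ι)
    {c : ι → ℝ} {w : ι → E} (hc : ∀ j, 0 ≤ c j) (hw : ∀ j, w j ∈ c j • B) :
    ∑ j ∈ s, w j ∈ (∑ j ∈ s, c j) • B := by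
  classical
  induction s using Finset.induction_on with
  | empty => simpa using Set.zero_mem_smul_set h0
  | insert j s hj ih =>
    rw [Finset.sum_insert hj, Finset.sum_insert hj,
      hconv.add_smul (hc j) (Finset.sum_nonneg fun i _ => hc i)]
    exact Set.add_mem_add (hw j) ih

theorem exists_pos_mem_smul_of_mem_span (hbal : Balanced ℝ B) (hconv : Convex ℝ B)
    (h0 : (0 : E) ∈ B) {x : E} (hx : x ∈ Submodule.span ℝ B) : ∃ t > (0 : ℝ), x ∈ t • B := by
  induction hx using Submodule.span_induction with
  | mem x hx => exact ⟨1, one_pos, by rwa [one_smul]⟩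
  | zero => exact ⟨1, one_pos, Set.zero_mem_smul_set h0⟩
  | add x y _ _ hx hy =>
    obtain ⟨s, hs, hxs⟩ := hx
    obtain ⟨t, ht, hyt⟩ := hy
    exact ⟨s + t, by positivity, hconv.add_smul hs.le ht.le ▸ Set.add_mem_add hxs hyt⟩
  | smul c x _ hx =>
    obtain ⟨t, ht, hxt⟩ := hx
    refine ⟨|c| * t + 1, by positivity, hbal.smul_mono (a := c * t) ?_ ?_⟩
    · simp only [Real.norm_eq_abs, abs_mul, abs_of_pos ht]
      exact (lt_add_one _).le.trans (le_abs_self _)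
    · rw [mul_smul]
      exact Set.smul_mem_smul_set hxt

-- A point that no `t • B` contains has the junk gauge `sInf ∅ = 0`.
theorem mem_smul_of_gauge_lt (hbal : Balanced ℝ B) (hconv : Convex ℝ B) (h0 : (0 : E) ∈ B)
    {x : E} (hx : x ∈ Submodule.span ℝ B) {ε : ℝ} (h : gauge B x < ε) : x ∈ ε • B := by
  obtain ⟨t, ht, hxt⟩ := exists_pos_mem_smul_of_mem_span hbal hconv h0 hx
  obtain ⟨r, ⟨hr, hxr⟩, hrε⟩ := exists_lt_of_csInf_lt
    (show {r : ℝ | 0 < r ∧ x ∈ r • B}.Nonempty from ⟨t, ht, hxt⟩) h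
  refine hbal.smul_mono ?_ hxr
  rw [Real.norm_eq_abs, Real.norm_eq_abs, abs_of_pos hr, abs_of_pos (hr.trans hrε)]
  exact hrε.le

theorem gauge_add_le_of_mem_span (hbal : Balanced ℝ B) (hconv : Convex ℝ B) (h0 : (0 : E) ∈ B)
    {x y : E} (hx : x ∈ Submodule.span ℝ B) (hy : y ∈ Submodule.span ℝ B) :
    gauge B (x + y) ≤ gauge B x + gauge B y := by
  refine le_of_forall_pos_le_add fun ε hε =>
    gauge_le_of_mem (by linarith [gauge_nonneg (s := B) x, gauge_nonneg (s := B) y]) ?_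
  have hx' := mem_smul_of_gauge_lt hbal hconv h0 hx (lt_add_of_pos_right _ (half_pos hε))
  have hy' := mem_smul_of_gauge_lt hbal hconv h0 hy (lt_add_of_pos_right _ (half_pos hε))
  have hsum : x + y ∈ (gauge B x + ε / 2 + (gauge B y + ε / 2)) • B := by
    rw [hconv.add_smul (by linarith [gauge_nonneg (s := B) x])
      (by linarith [gauge_nonneg (s := B) y])]
    exact Set.add_mem_add hx' hy'
  convert hsum using 2
  ring

theorem gauge_image_le (hbal : Balanced ℝ B) (hconv : Convex ℝ B) (h0 : (0 : E) ∈ B)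
    (f : E →ₗ[ℝ] F) {x : E} (hx : x ∈ Submodule.span ℝ B) :
    gauge (f '' B) (f x) ≤ gauge B x := by
  refine le_of_forall_pos_le_add fun ε hε =>
    gauge_le_of_mem (by linarith [gauge_nonneg (s := B) x]) ?_
  rw [← image_smul_set]
  exact Set.mem_image_of_mem f
    (mem_smul_of_gauge_lt hbal hconv h0 hx (lt_add_of_pos_right _ hε))

theorem GaugeCauchySeq.of_gauge_sub_le_dist (hbal : Balanced ℝ B) {u : ℕ → E} {a : ℕ → ℝ}
    (ha : CauchySeq a) (h : ∀ n m, n ≤ m → gauge B (u m - u n) ≤ dist (a m) (a n)) :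
    GaugeCauchySeq B u := by
  intro ε hε
  obtain ⟨N, hN⟩ := Metric.cauchySeq_iff.1 ha ε hε
  refine ⟨N, fun m hm n hn => ?_⟩
  rcases le_total n m with hnm | hmn
  · exact (h n m hnm).trans_lt (hN m hm n hn)
  · rw [← neg_sub, gauge_neg fun _ => hbal.neg_mem_iff.2]
    exact (h m n hmn).trans_lt (hN n hn m hm)

theorem gaugeCauchySeq_add_partialSums (hbal : Balanced ℝ B) (hconv : Convex ℝ B)
    (h0 : (0 : E) ∈ B) {c : ℕ → ℝ} (hc0 : ∀ j, 0 ≤ c j) (hc : Summable c) {w : ℕ → E}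
    (hw : ∀ j, w j ∈ c j • B) (x₀ : E) :
    GaugeCauchySeq B fun k => x₀ + ∑ j ∈ Finset.range k, w j := by
  refine .of_gauge_sub_le_dist hbal hc.hasSum.tendsto_sum_nat.cauchySeq fun n m hnm => ?_
  rw [add_sub_add_left_eq_sub, ← Finset.sum_Ico_eq_sub _ hnm, Real.dist_eq,
    ← Finset.sum_Ico_eq_sub _ hnm]
  exact (gauge_le_of_mem (Finset.sum_nonneg fun j _ => hc0 j)
    (hconv.sum_mem_smul h0 _ hc0 hw)).trans (le_abs_self _)

theorem GaugeCauchySeq.exists_strictMono_gauge_sub_lt {u : ℕ → E} (hu : GaugeCauchySeq B u)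
    {ε : ℕ → ℝ} (hε : ∀ k, 0 < ε k) :
    ∃ φ : ℕ → ℕ, StrictMono φ ∧ ∀ k, gauge B (u (φ (k + 1)) - u (φ k)) < ε k := by
  obtain ⟨φ, hφ, hφu⟩ := extraction_forall_of_eventually'
    (P := fun k n => ∀ m ≥ n, gauge B (u m - u n) < ε k) fun k => by
      obtain ⟨N, hN⟩ := hu (ε k) (hε k)
      exact ⟨N, fun n hn m hm => hN m (hn.trans hm) n hn⟩
  exact ⟨φ, hφ, fun k => hφu k _ (hφ (Nat.lt_succ_self k)).le⟩

theorem GaugeCauchySeq.tendsto_of_subseq (hbal : Balanced ℝ B) (hconv : Convex ℝ B)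
    (h0 : (0 : E) ∈ B) {u : ℕ → E} (hu : GaugeCauchySeq B u)
    (hmem : ∀ n, u n ∈ Submodule.span ℝ B) {x : E} (hx : x ∈ Submodule.span ℝ B)
    {φ : ℕ → ℕ} (hφ : StrictMono φ) (h : Tendsto (fun k => gauge B (u (φ k) - x)) atTop (𝓝 0)) :
    Tendsto (fun n => gauge B (u n - x)) atTop (𝓝 0) := by
  refine tendsto_order.2 ⟨fun a ha => .of_forall fun n => ha.trans_le (gauge_nonneg _),
    fun ε hε => ?_⟩
  obtain ⟨N, hN⟩ := hu (ε / 2) (half_pos hε)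
  obtain ⟨K, hK⟩ := eventually_atTop.1 ((tendsto_order.1 h).2 _ (half_pos hε))
  set k := max K N
  filter_upwards [eventually_ge_atTop N] with n hn
  calc gauge B (u n - x) = gauge B ((u n - u (φ k)) + (u (φ k) - x)) := by
        rw [sub_add_sub_cancel]
    _ ≤ gauge B (u n - u (φ k)) + gauge B (u (φ k) - x) :=
        gauge_add_le_of_mem_span hbal hconv h0 (sub_mem (hmem n) (hmem _)) (sub_mem (hmem _) hx)
    _ < ε / 2 + ε / 2 :=
        add_lt_add (hN n hn _ ((le_max_right K N).trans (hφ.id_le k))) (hK k (le_max_left K N))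
    _ = ε := add_halves ε

theorem Bornology.IsVonNBounded.eq_zero_of_forall_mem_smul {G : Type*} [AddCommGroup G]
    [Module ℝ G] [TopologicalSpace G] [T1Space G] {S : Set G} (hS : IsVonNBounded ℝ S)
    {x : G} (hx : ∀ ε : ℝ, 0 < ε → x ∈ ε • S) : x = 0 := by
  choose s hs hsx using fun n : ℕ => hx (1 / ((n : ℝ) + 1)) Nat.one_div_pos_of_nat
  have : Tendsto (fun n : ℕ => (1 / ((n : ℝ) + 1)) • s n) atTop (𝓝 0) :=
    hS.smul_tendsto_zero (.of_forall hs) tendsto_one_div_add_atTop_nhds_zero_nat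
  simp only [hsx] at this
  exact tendsto_const_nhds_iff.1 this

theorem eq_zero_of_gauge_eq_zero {Λ : Type*} {G : Λ → Type*} [∀ l, AddCommGroup (G l)]
    [∀ l, Module ℝ (G l)] [∀ l, TopologicalSpace (G l)] [∀ l, T1Space (G l)]
    (g : ∀ l, F →ₗ[ℝ] G l) (hsep : ∀ y : F, y ≠ 0 → ∃ l, g l y ≠ 0) {C : Set F}
    (hbal : Balanced ℝ C) (hconv : Convex ℝ C) (h0 : (0 : F) ∈ C)
    (hbdd : ∀ l, Bornology.IsVonNBounded ℝ (g l '' C)) {y : F}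
    (hy : y ∈ Submodule.span ℝ C) (h : gauge C y = 0) : y = 0 := by
  by_contra hy0
  obtain ⟨l, hl⟩ := hsep y hy0
  refine hl ((hbdd l).eq_zero_of_forall_mem_smul fun ε hε => ?_)
  rw [← image_smul_set]
  exact Set.mem_image_of_mem _ (mem_smul_of_gauge_lt hbal hconv h0 hy (h ▸ hε))

theorem IsGaugeComplete.image (hB : IsGaugeComplete B) (hbal : Balanced ℝ B)
    (hconv : Convex ℝ B) (h0 : (0 : E) ∈ B) (f : E →ₗ[ℝ] F) : IsGaugeComplete (f '' B) := by
  have hCbal := hbal.linear_image f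
  have hCconv := hconv.linear_image f
  have hC0 : (0 : F) ∈ f '' B := ⟨0, h0, map_zero f⟩
  have hspan : Submodule.span ℝ (f '' B) = (Submodule.span ℝ B).map f := Submodule.span_image f
  intro u hu hcau
  obtain ⟨φ, hφ, hφu⟩ := hcau.exists_strictMono_gauge_sub_lt fun k => pow_pos one_half_pos k
  have hlift : ∀ k, ∃ w ∈ ((1 / 2 : ℝ) ^ k) • B, f w = u (φ (k + 1)) - u (φ k) := fun k => by
    rw [← Set.mem_image, image_smul_set]
    exact mem_smul_of_gauge_lt hCbal hCconv hC0 (sub_mem (hu _) (hu _)) (hφu k)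
  choose w hw hfw using hlift
  obtain ⟨v₀, hv₀, hfv₀⟩ := hspan ▸ hu (φ 0)
  set v : ℕ → E := fun k => v₀ + ∑ j ∈ Finset.range k, w j
  have hv : ∀ k, v k ∈ Submodule.span ℝ B := fun k => add_mem hv₀ <| sum_mem fun j _ => by
    obtain ⟨b, hb, hbw⟩ := hw j
    exact hbw ▸ Submodule.smul_mem _ _ (Submodule.subset_span hb)
  have hfv : ∀ k, f (v k) = u (φ k) := fun k => by
    simp only [v, map_add, map_sum, hfw, Finset.sum_range_sub (fun j => u (φ j)), hfv₀,
      add_sub_cancel]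
  obtain ⟨x, hx, hvx⟩ := hB v hv (gaugeCauchySeq_add_partialSums hbal hconv h0
    (fun j => by positivity) summable_geometric_two hw v₀)
  have hfx : f x ∈ Submodule.span ℝ (f '' B) := hspan ▸ Submodule.mem_map_of_mem hx
  refine ⟨f x, hfx, hcau.tendsto_of_subseq hCbal hCconv hC0 hu hfx hφ ?_⟩
  refine squeeze_zero (fun _ => gauge_nonneg _) (fun k => ?_) hvx
  rw [← hfv, ← map_sub]
  exact gauge_image_le hbal hconv h0 f (sub_mem (hv k) hx)

end Gauge

theorem banach_of_image_gauge_general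
    {E F : Type*} {Λ : Type*} {Fl : Λ → Type*}
    [AddCommGroup E] [Module ℝ E] [AddCommGroup F] [Module ℝ F]
    [∀ l, AddCommGroup (Fl l)] [∀ l, Module ℝ (Fl l)]
    [∀ l, TopologicalSpace (Fl l)] [∀ l, T2Space (Fl l)]
    (f : E →ₗ[ℝ] F) (g : ∀ l, F →ₗ[ℝ] Fl l)
    (hsep : ∀ y : F, y ≠ 0 → ∃ l, g l y ≠ 0)
    (B : Set E) (hbal : Balanced ℝ B) (hconv : Convex ℝ B)
    (hcomplete : ∀ u : ℕ → E, (∀ n, u n ∈ Submodule.span ℝ B) →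
      (∀ ε > 0, ∃ N : ℕ, ∀ m ≥ N, ∀ n ≥ N, gauge B (u m - u n) < ε) →
      ∃ x ∈ Submodule.span ℝ B,
        Tendsto (fun n => gauge B (u n - x)) atTop (𝓝 0))
    (hbdd : ∀ l, Bornology.IsVonNBounded ℝ (g l '' (f '' B))) :
    (∀ y ∈ Submodule.span ℝ (f '' B), gauge (f '' B) y = 0 → y = 0) ∧
      (∀ u : ℕ → F, (∀ n, u n ∈ Submodule.span ℝ (f '' B)) →
        (∀ ε > 0, ∃ N : ℕ, ∀ m ≥ N, ∀ n ≥ N, gauge (f '' B) (u m - u n) < ε) →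
        ∃ y ∈ Submodule.span ℝ (f '' B),
          Tendsto (fun n => gauge (f '' B) (u n - y)) atTop (𝓝 0)) := by
  rcases B.eq_empty_or_nonempty with rfl | hne
  · simp
  have h0 := hbal.zero_mem hne
  exact ⟨fun y hy => eq_zero_of_gauge_eq_zero g hsep (hbal.linear_image f)
      (hconv.linear_image f) ⟨0, h0, map_zero f⟩ hbdd hy,
    IsGaugeComplete.image hcomplete hbal hconv h0 f⟩

/-- Lemma B.4 of the paper: let `f : E → F` be linear, `g λ : F → F_λ` a point
separating family of linear maps into Hausdorff topological vector spaces, and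
`B ⊆ E` a balanced convex set such that `(E_B, p_B)` is a Banach space (the
Minkowski functional `gauge B` is a norm on `span ℝ B` for which it is
complete).  If every set `(g λ ∘ f)(B)` is von Neumann bounded, then
`(F_{f(B)}, p_{f(B)})` is a Banach space as well. -/
theorem banach_of_image_gauge
    {E F : Type*} {Λ : Type*} {Fl : Λ → Type*}
    [AddCommGroup E] [Module ℝ E] [AddCommGroup F] [Module ℝ F]
    [∀ l, AddCommGroup (Fl l)] [∀ l, Module ℝ (Fl l)]
    [∀ l, TopologicalSpace (Fl l)] [∀ l, IsTopologicalAddGroup (Fl l)]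
    [∀ l, ContinuousSMul ℝ (Fl l)] [∀ l, T2Space (Fl l)]
    (f : E →ₗ[ℝ] F) (g : ∀ l, F →ₗ[ℝ] Fl l)
    (hsep : ∀ y : F, y ≠ 0 → ∃ l, g l y ≠ 0)
    (B : Set E) (hbal : Balanced ℝ B) (hconv : Convex ℝ B)
    (hnorm : ∀ x ∈ Submodule.span ℝ B, gauge B x = 0 → x = 0)
    (hcomplete : ∀ u : ℕ → E, (∀ n, u n ∈ Submodule.span ℝ B) →
      (∀ ε > 0, ∃ N : ℕ, ∀ m ≥ N, ∀ n ≥ N, gauge B (u m - u n) < ε) →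
      ∃ x ∈ Submodule.span ℝ B,
        Tendsto (fun n => gauge B (u n - x)) atTop (𝓝 0))
    (hbdd : ∀ l, Bornology.IsVonNBounded ℝ (g l '' (f '' B))) :
    (∀ y ∈ Submodule.span ℝ (f '' B), gauge (f '' B) y = 0 → y = 0) ∧
      (∀ u : ℕ → F, (∀ n, u n ∈ Submodule.span ℝ (f '' B)) →
        (∀ ε > 0, ∃ N : ℕ, ∀ m ≥ N, ∀ n ≥ N, gauge (f '' B) (u m - u n) < ε) →
        ∃ y ∈ Submodule.span ℝ (f '' B),
          Tendsto (fun n => gauge (f '' B) (u n - y)) atTop (𝓝 0)) :=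
  banach_of_image_gauge_general f g hsep B hbal hconv hcomplete hbdd
end

section
/- Let E and F be real vector spaces, f : E → F a linear map, and B ⊆ E a balanced convex set. Then for every y ∈ F the Minkowski functional of the image set satisfies gauge (f(B)) y = inf { gauge B x : x ∈ span_ℝ B, f(x) = y }, the infimum over the empty set being 0. (In other words, the Minkowski functional p_{f(B)} of f(B) is the quotient seminorm of p_B under f restricted to span_ℝ B.) -/
open Pointwise

private lemma absorb_of_balanced_convex
    {E : Type*} [AddCommGroup E] [Module ℝ E] {B : Set E}
    (hbal : Balanced ℝ B) (hconv : Convex ℝ B) (h0 : (0:E) ∈ B)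
    {x : E} (hx : x ∈ Submodule.span ℝ B) :
    ∃ t : ℝ, 0 < t ∧ x ∈ t • B := by
  induction hx using Submodule.span_induction with
  | mem z hz => exact ⟨1, one_pos, by simpa using hz⟩
  | zero => exact ⟨1, one_pos, ⟨0, h0, smul_zero 1⟩⟩
  | add a b _ _ iha ihb =>
      obtain ⟨s, hs, has⟩ := iha
      obtain ⟨t, ht, hbt⟩ := ihb
      exact ⟨s + t, by positivity,
        by rw [hconv.add_smul hs.le ht.le]; exact Set.add_mem_add has hbt⟩
  | smul c a _ ih =>
      obtain ⟨t, ht, hat⟩ := ih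
      rcases eq_or_ne c 0 with rfl | hc
      · exact ⟨t, ht, by simpa using ⟨0, h0, smul_zero t⟩⟩
      · obtain ⟨b, hb, rfl⟩ := hat
        refine ⟨|c| * t, by positivity,
          ⟨(c / |c|) • b, hbal (c / |c|)
            (by simp [abs_div, abs_abs, div_self (abs_ne_zero.2 hc)])
            (Set.smul_mem_smul_set hb), ?_⟩⟩
        show (|c| * t) • ((c / |c|) • b) = c • t • b
        rw [smul_smul, smul_smul]
        congr 1
        have habs : |c| ≠ 0 := abs_ne_zero.2 hc
        field_simp

/-- The Minkowski functional of the image `f(B)` of a balanced convex set `B`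
under a linear map `f` is the quotient seminorm of the Minkowski functional of
`B`:  `gauge (f '' B) y = inf { gauge B x : x ∈ span ℝ B, f x = y }`,
the infimum over the empty set being `0`. -/
theorem gauge_image_eq_quotient_seminorm
    {E F : Type*} [AddCommGroup E] [Module ℝ E] [AddCommGroup F] [Module ℝ F]
    (f : E →ₗ[ℝ] F) (B : Set E) (hbal : Balanced ℝ B) (hconv : Convex ℝ B)
    (y : F) :
    gauge (f '' B) y =
      sInf (gauge B '' {x : E | x ∈ Submodule.span ℝ B ∧ f x = y}) := by
  set S : Set E := {x : E | x ∈ Submodule.span ℝ B ∧ f x = y} with hS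
  have hbdd : ∀ (T : Set F) (z : F), BddBelow {r : ℝ | 0 < r ∧ z ∈ r • T} :=
    fun T z => ⟨0, fun r hr => hr.1.le⟩
  rcases B.eq_empty_or_nonempty with rfl | hBne
  · -- B empty
    simp only [Set.image_empty]
    rw [gauge_empty]
    rcases S.eq_empty_or_nonempty with hSe | ⟨x, hx⟩
    · rw [hSe]; simp [Real.sInf_empty]
    · have hx0 : x = 0 := by
        have := hx.1
        simpa [Submodule.span_empty] using this
      have : gauge (∅ : Set E) '' S = {0} := by
        apply Set.Subset.antisymm
        · rintro r ⟨z, hz, rfl⟩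
          have hz0 : z = 0 := by simpa [Submodule.span_empty] using hz.1
          simp [gauge_empty]
        · rintro r rfl
          exact ⟨x, hx, by simp [gauge_empty]⟩
      rw [this]; simp
  · have h0B : (0:E) ∈ B := by
      obtain ⟨b, hb⟩ := hBne
      have := hbal 0 (by simp) (Set.smul_mem_smul_set hb)
      simpa using this
    -- absorption
    have habs : ∀ x ∈ Submodule.span ℝ B, ∃ t : ℝ, 0 < t ∧ x ∈ t • B :=
      fun x hx => absorb_of_balanced_convex hbal hconv h0B hx
    rcases S.eq_empty_or_nonempty with hSe | hSne
    · -- no preimage: both sides 0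
      have hT : {r : ℝ | 0 < r ∧ y ∈ r • (f '' B)} = ∅ := by
        ext r
        simp only [Set.mem_setOf_eq, Set.mem_empty_iff_false, iff_false]
        rintro ⟨hr, z, ⟨b, hb, rfl⟩, rfl⟩
        have : r • b ∈ S := by
          refine ⟨Submodule.smul_mem _ _ (Submodule.subset_span hb), by simp⟩
        rw [hSe] at this
        exact this
      rw [gauge, hT, hSe, Set.image_empty]
    · apply le_antisymm
      · -- gauge (f '' B) y ≤ gauge B x for each x ∈ S
        apply le_csInf (hSne.image _)
        rintro r ⟨x, ⟨hxspan, hxy⟩, rfl⟩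
        obtain ⟨t, ht, hxt⟩ := habs x hxspan
        rw [gauge, gauge]
        refine csInf_le_csInf (hbdd _ _) ⟨t, ht, hxt⟩ ?_
        rintro s ⟨hs, b, hb, rfl⟩
        exact ⟨hs, f b, Set.mem_image_of_mem f hb, by simp [hxy ▸ (map_smul f s b).symm]⟩
      · -- sInf (gauge B '' S) ≤ gauge (f '' B) y
        obtain ⟨x, hxS⟩ := hSne
        obtain ⟨t, ht, hxt⟩ := habs x hxS.1
        have hTne : {r : ℝ | 0 < r ∧ y ∈ r • (f '' B)} |>.Nonempty := by
          obtain ⟨b, hb, rfl⟩ := hxt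
          exact ⟨t, ht, f b, Set.mem_image_of_mem f hb, by simp [← hxS.2]⟩
        rw [gauge]
        apply le_csInf hTne
        rintro r ⟨hr, z, ⟨b, hb, rfl⟩, rfl⟩
        have hmem : r • b ∈ S :=
          ⟨Submodule.smul_mem _ _ (Submodule.subset_span hb), by simp⟩
        calc sInf (gauge B '' S) ≤ gauge B (r • b) :=
              csInf_le ⟨0, by rintro s ⟨w, _, rfl⟩; exact gauge_nonneg w⟩
                (Set.mem_image_of_mem _ hmem)
          _ ≤ r := gauge_le_of_mem hr.le (Set.smul_mem_smul_set hb)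
end

section
/- Let n ∈ ℕ, m ∈ ℕ, let K ⊆ ℝⁿ be compact, and let g : ℝⁿ × ℝⁿ → ℝ be smooth with g(x, x) = 0 for all x ∈ ℝⁿ. Let R > 0, C₀ > 0, C₁ > 0, and for each ε ∈ (0,1] and each x ∈ K let φ_{ε,x} : ℝⁿ → ℝ be a continuous function such that: (a) the support of φ_{ε,x} is contained in the closed ball of radius R about 0; (b) ∫_{ℝⁿ} |φ_{ε,x}(z)| dz ≤ C₀; (c) for every multi-index β with 1 ≤ |β| ≤ m one has |∫_{ℝⁿ} φ_{ε,x}(z) z^β dz| ≤ C₁ ε^{m+1−|β|}. Then there exists a constant C > 0 such that for all ε ∈ (0,1] and all x ∈ K, |∫_{ℝⁿ} g(x, x + ε z) φ_{ε,x}(z) dz| ≤ C ε^{m+1}. -/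
open MeasureTheory Set
open ContDiff

private lemma fderiv_comp_const_add' {E F : Type*} [NormedAddCommGroup E] [NormedSpace ℝ E]
    [NormedAddCommGroup F] [NormedSpace ℝ F] {h : E → F} {a x : E}
    (hh : DifferentiableAt ℝ h (a + x)) :
    fderiv ℝ (fun y => h (a + y)) x = fderiv ℝ h (a + x) := by
  have h1 : HasFDerivAt (fun y : E => a + y) (ContinuousLinearMap.id ℝ E) x := by
    simpa using (hasFDerivAt_id x).const_add a
  have h2 := hh.hasFDerivAt.comp x h1
  simpa [Function.comp_def] using h2.fderiv

private lemma iteratedFDeriv_comp_const_add {E F : Type*} [NormedAddCommGroup E] [NormedSpace ℝ E]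
    [NormedAddCommGroup F] [NormedSpace ℝ F] {f : E → F} (hf : ContDiff ℝ ∞ f) (a : E) :
    ∀ (k : ℕ) (x : E), iteratedFDeriv ℝ k (fun y => f (a + y)) x = iteratedFDeriv ℝ k f (a + x) := by
  intro k
  induction k with
  | zero => intro x; ext m; simp
  | succ k IH =>
      intro x; ext m
      rw [iteratedFDeriv_succ_apply_left, iteratedFDeriv_succ_apply_left]
      have hfun : (iteratedFDeriv ℝ k fun y => f (a + y)) = fun y => iteratedFDeriv ℝ k f (a + y) :=
        funext IH
      rw [hfun, fderiv_comp_const_add'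
        ((hf.differentiable_iteratedFDeriv (mod_cast ENat.coe_lt_top k)) (a + x))]

private lemma iteratedDeriv_line {E : Type*} [NormedAddCommGroup E] [NormedSpace ℝ E]
    {f : E → ℝ} (hf : ContDiff ℝ ∞ f) (a v : E) (k : ℕ) (t : ℝ) :
    iteratedDeriv k (fun s : ℝ => f (a + s • v)) t
      = iteratedFDeriv ℝ k f (a + t • v) (fun _ => v) := by
  have hG : ContDiff ℝ ∞ (fun y : E => f (a + y)) :=
    hf.comp (contDiff_const.add contDiff_id)
  set L : ℝ →L[ℝ] E := (ContinuousLinearMap.id ℝ ℝ).smulRight v with hLdef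
  have hL : ∀ s : ℝ, L s = s • v := fun s => by simp [hLdef]
  have hcomp : (fun s : ℝ => f (a + s • v)) = (fun y : E => f (a + y)) ∘ L := by
    funext s; simp [Function.comp, hL]
  rw [iteratedDeriv_eq_iteratedFDeriv, hcomp, L.iteratedFDeriv_comp_right hG t (by exact_mod_cast le_top)]
  rw [ContinuousMultilinearMap.compContinuousLinearMap_apply]
  simp only [hL, one_smul]
  rw [iteratedFDeriv_comp_const_add hf a k (t • v)]

private lemma iteratedDerivWithin_eq_iteratedDeriv' {f : ℝ → ℝ} (hf : ContDiff ℝ ∞ f)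
    {s : Set ℝ} (hs : UniqueDiffOn ℝ s) {x : ℝ} (hx : x ∈ s) (k : ℕ) :
    iteratedDerivWithin k f s x = iteratedDeriv k f x := by
  rw [iteratedDerivWithin_eq_iteratedFDerivWithin, iteratedDeriv_eq_iteratedFDeriv]
  congr 1
  exact (((contDiff_iff_ftaylorSeries.mp hf).hasFTaylorSeriesUpToOn
    s).eq_iteratedFDerivWithin_of_uniqueDiffOn (by exact_mod_cast le_top) hs hx).symm

private lemma taylor_bound_line {E : Type*} [NormedAddCommGroup E] [NormedSpace ℝ E]
    {f : E → ℝ} (hf : ContDiff ℝ ∞ f) (m : ℕ) (a v : E) {M : ℝ}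
    (hM : ∀ t ∈ Icc (0:ℝ) 1, |iteratedFDeriv ℝ (m+1) f (a + t • v) (fun _ => v)| ≤ M) :
    |f (a + v) - ∑ k ∈ Finset.range (m+1),
      ((Nat.factorial k : ℝ)⁻¹) * iteratedFDeriv ℝ k f a (fun _ => v)| ≤ M := by
  have hM0 : 0 ≤ M := le_trans (abs_nonneg _) (hM 0 ⟨le_rfl, zero_le_one⟩)
  set h : ℝ → ℝ := fun t => f (a + t • v) with hh
  have hhsm : ContDiff ℝ ∞ h :=
    hf.comp (contDiff_const.add (contDiff_id.smul contDiff_const))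
  have hud : UniqueDiffOn ℝ (Icc (0:ℝ) 1) := uniqueDiffOn_Icc zero_lt_one
  have key := taylor_mean_remainder_bound (f := h) (a := 0) (b := 1) (n := m) (C := M) (x := 1)
    zero_le_one ((hhsm.of_le (by exact_mod_cast le_top)).contDiffOn) (right_mem_Icc.2 zero_le_one)
    (fun y hy => by
      rw [iteratedDerivWithin_eq_iteratedDeriv' hhsm hud hy,
        iteratedDeriv_line hf a v (m+1) y]
      exact hM y hy)
  have e1 : h 1 = f (a + v) := by simp [hh]
  have e2 : taylorWithinEval h m (Icc (0:ℝ) 1) 0 1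
      = ∑ k ∈ Finset.range (m+1), ((Nat.factorial k : ℝ)⁻¹) * iteratedFDeriv ℝ k f a (fun _ => v) := by
    rw [taylor_within_apply]
    refine Finset.sum_congr rfl fun k hk => ?_
    rw [iteratedDerivWithin_eq_iteratedDeriv' hhsm hud (left_mem_Icc.2 zero_le_one),
      iteratedDeriv_line hf a v k 0]
    simp
  rw [e1, e2] at key
  refine key.trans ?_
  rw [sub_zero, one_pow, mul_one]
  exact div_le_self hM0 (by exact_mod_cast m.factorial_pos)

/-- Local coordinate form of Lemma 3.8: if `g` is smooth on `ℝⁿ × ℝⁿ` and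
vanishes on the diagonal, and `φ_{ε,x}` is a family of continuous kernels with
supports in a fixed ball, uniformly bounded `L¹`-norms, and moments of order
`1 ≤ |β| ≤ m` of size `O(ε^{m+1-|β|})` (uniformly for `x ∈ K`), then
`∫ g(x, x + εz) φ_{ε,x}(z) dz = O(ε^{m+1})` uniformly on the compact set `K`. -/
theorem smoothing_kernel_diagonal_estimate
    (n m : ℕ) (K : Set (Fin n → ℝ)) (hK : IsCompact K)
    (g : (Fin n → ℝ) × (Fin n → ℝ) → ℝ) (hg : ContDiff ℝ (⊤ : ℕ∞) g)
    (hg0 : ∀ x : Fin n → ℝ, g (x, x) = 0)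
    (R C₀ C₁ : ℝ) (hR : 0 < R) (hC₀ : 0 < C₀) (hC₁ : 0 < C₁)
    (φ : ℝ → (Fin n → ℝ) → (Fin n → ℝ) → ℝ)
    (hcont : ∀ ε ∈ Ioc (0:ℝ) 1, ∀ x ∈ K, Continuous (φ ε x))
    (hsupp : ∀ ε ∈ Ioc (0:ℝ) 1, ∀ x ∈ K,
      Function.support (φ ε x) ⊆ Metric.closedBall 0 R)
    (hL1 : ∀ ε ∈ Ioc (0:ℝ) 1, ∀ x ∈ K, (∫ z : Fin n → ℝ, |φ ε x z|) ≤ C₀)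
    (hmom : ∀ ε ∈ Ioc (0:ℝ) 1, ∀ x ∈ K, ∀ β : Fin n → ℕ,
      1 ≤ ∑ i, β i → ∑ i, β i ≤ m →
      |∫ z : Fin n → ℝ, φ ε x z * ∏ i, z i ^ β i| ≤ C₁ * ε ^ (m + 1 - ∑ i, β i)) :
    ∃ C > 0, ∀ ε ∈ Ioc (0:ℝ) 1, ∀ x ∈ K,
      |∫ z : Fin n → ℝ, g (x, x + ε • z) * φ ε x z| ≤ C * ε ^ (m + 1) := by
  classical
  have hgi : ContDiff ℝ ∞ g := hg.of_le (by simp)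
  -- the compact set where all the action happens
  set S : Set ((Fin n → ℝ) × (Fin n → ℝ)) :=
    (fun p : (Fin n → ℝ) × (Fin n → ℝ) => (p.1, p.1 + p.2)) '' (K ×ˢ Metric.closedBall 0 R)
    with hSdef
  have hScomp : IsCompact S :=
    (hK.prod (isCompact_closedBall 0 R)).image (by fun_prop)
  -- uniform bounds on the iterated derivatives of g on S
  have hMex : ∀ k : ℕ, ∃ Mk : ℝ, 0 ≤ Mk ∧ ∀ p ∈ S, ‖iteratedFDeriv ℝ k g p‖ ≤ Mk := by
    intro k
    obtain ⟨Mk, hMk⟩ := hScomp.exists_bound_of_continuousOn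
      ((hgi.continuous_iteratedFDeriv (by exact_mod_cast le_top)).continuousOn)
    exact ⟨max Mk 0, le_max_right _ _, fun p hp => (hMk p hp).trans (le_max_left _ _)⟩
  choose Mf hMf0 hMfb using hMex
  set M : ℝ := ∑ k ∈ Finset.range (m+2), Mf k with hMdef
  have hM0 : 0 ≤ M := Finset.sum_nonneg fun k _ => hMf0 k
  have hMb : ∀ k, k ≤ m+1 → ∀ p ∈ S, ‖iteratedFDeriv ℝ k g p‖ ≤ M := by
    intro k hk p hp
    exact (hMfb k p hp).trans
      (Finset.single_le_sum (fun i _ => hMf0 i) (Finset.mem_range.mpr (Nat.lt_succ_of_le hk)))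
  set A : ℝ := (∑ k ∈ Finset.range (m+1), (n:ℝ)^k) * (M * C₁) + M * R^(m+1) * C₀ with hAdef
  have hsum0 : (0:ℝ) ≤ ∑ k ∈ Finset.range (m+1), (n:ℝ)^k :=
    Finset.sum_nonneg fun k _ => by positivity
  have hA0 : 0 ≤ A := by positivity
  refine ⟨A + 1, by positivity, ?_⟩
  intro ε hε x hx
  obtain ⟨hε0, hε1⟩ := hε
  set ψ : (Fin n → ℝ) → ℝ := φ ε x with hψdef
  have hψc : Continuous ψ := hcont ε ⟨hε0, hε1⟩ x hx
  have hψs : Function.support ψ ⊆ Metric.closedBall 0 R := hsupp ε ⟨hε0, hε1⟩ x hx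
  have hψcs : HasCompactSupport ψ :=
    HasCompactSupport.intro (isCompact_closedBall 0 R)
      (Function.support_subset_iff'.mp hψs)
  have hIψ : Integrable ψ := hψc.integrable_of_hasCompactSupport hψcs
  have hInt : ∀ f : (Fin n → ℝ) → ℝ, Continuous f →
      Integrable (fun z => f z * ψ z) := by
    intro f hf
    exact (hf.mul hψc).integrable_of_hasCompactSupport hψcs.mul_left
  -- basis vectors in the second factor
  set u : Fin n → (Fin n → ℝ) × (Fin n → ℝ) := fun i => (0, Pi.single i 1) with hudef
  have hu1 : ∀ i, ‖u i‖ ≤ 1 := by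
    intro i
    simp [hudef, Prod.norm_def, Pi.norm_single]
  have hxxS : ((x, x) : (Fin n → ℝ) × (Fin n → ℝ)) ∈ S := by
    refine ⟨(x, 0), ⟨hx, by simp [hR.le]⟩, by simp⟩
  -- decomposition of (0, ε • z) in terms of the u i
  have hdecomp : ∀ z : Fin n → ℝ,
      ((0:Fin n → ℝ), ε • z) = ∑ i, (ε * z i) • u i := by
    intro z
    refine Prod.ext ?_ ?_
    · simp [hudef, Prod.fst_sum]
    · simp only [hudef, Prod.snd_sum, Prod.smul_mk, smul_zero]
      funext j
      simp [Finset.sum_apply, Pi.single_apply, mul_ite, Finset.sum_ite_eq,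
        Finset.sum_ite_eq']
  -- multilinear expansion of the iterated derivatives
  have hexpand : ∀ (k : ℕ) (z : Fin n → ℝ),
      iteratedFDeriv ℝ k g (x, x) (fun _ => ((0:Fin n → ℝ), ε • z))
        = ∑ ι : Fin k → Fin n, (ε ^ k * ∏ j, z (ι j)) *
            iteratedFDeriv ℝ k g (x, x) (fun j => u (ι j)) := by
    intro k z
    have h1 : (fun _ : Fin k => ((0:Fin n → ℝ), ε • z))
        = fun _ : Fin k => ∑ i, (ε * z i) • u i := by
      funext _; exact hdecomp z
    rw [h1]
    have h2 := (iteratedFDeriv ℝ k g (x, x)).toMultilinearMap.map_sum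
      (g := fun (_ : Fin k) (i : Fin n) => (ε * z i) • u i)
    rw [show (iteratedFDeriv ℝ k g (x, x)) (fun _ : Fin k => ∑ i, (ε * z i) • u i)
        = (iteratedFDeriv ℝ k g (x, x)).toMultilinearMap
            (fun _ : Fin k => ∑ i, (ε * z i) • u i) from rfl, h2]
    refine Finset.sum_congr rfl fun ι _ => ?_
    rw [(iteratedFDeriv ℝ k g (x, x)).toMultilinearMap.map_smul_univ
      (fun j => ε * z (ι j)) (fun j => u (ι j))]
    rw [smul_eq_mul]
    congr 1
    rw [Finset.prod_mul_distrib, Finset.prod_const]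
    simp
  -- monomial rewriting
  have hmono : ∀ (k : ℕ) (ι : Fin k → Fin n) (z : Fin n → ℝ),
      (∏ j, z (ι j)) = ∏ i, z i ^ (Finset.univ.filter (fun j => ι j = i)).card := by
    intro k ι z
    rw [← Finset.prod_fiberwise_of_maps_to (g := ι) (fun j _ => Finset.mem_univ (ι j))
      (fun j => z (ι j))]
    refine Finset.prod_congr rfl fun i _ => ?_
    rw [Finset.prod_congr rfl (fun j hj => congrArg z (Finset.mem_filter.mp hj).2),
      Finset.prod_const]
  have hcard : ∀ (k : ℕ) (ι : Fin k → Fin n),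
      ∑ i, (Finset.univ.filter (fun j => ι j = i)).card = k := by
    intro k ι
    have := (Finset.card_eq_sum_card_fiberwise (f := ι) (s := Finset.univ)
      (t := Finset.univ) (fun j _ => Finset.mem_univ _)).symm
    simpa using this
  -- bound on the coefficients
  have hTle : ∀ (k : ℕ), k ≤ m + 1 → ∀ ι : Fin k → Fin n,
      |iteratedFDeriv ℝ k g (x, x) (fun j => u (ι j))| ≤ M := by
    intro k hk ι
    have h1 := (iteratedFDeriv ℝ k g (x, x)).le_opNorm (fun j => u (ι j))
    rw [Real.norm_eq_abs] at h1
    refine h1.trans ?_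
    calc ‖iteratedFDeriv ℝ k g (x, x)‖ * ∏ j, ‖u (ι j)‖
        ≤ M * 1 := by
          refine mul_le_mul (hMb k hk _ hxxS) ?_ (Finset.prod_nonneg fun j _ => norm_nonneg _) hM0
          calc (∏ j, ‖u (ι j)‖) ≤ ∏ _j : Fin k, (1:ℝ) :=
                Finset.prod_le_prod (fun j _ => norm_nonneg _) (fun j _ => hu1 (ι j))
            _ = 1 := by simp
      _ = M := mul_one M
  -- continuity of the derivative terms
  have hDcont : ∀ k : ℕ, Continuous fun z : Fin n → ℝ =>
      iteratedFDeriv ℝ k g (x, x) (fun _ : Fin k => ((0:Fin n → ℝ), ε • z)) := by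
    intro k
    exact (iteratedFDeriv ℝ k g (x, x)).cont.comp
      (continuous_pi fun _ => continuous_const.prodMk (continuous_id.const_smul ε))
  -- the Taylor polynomial
  set p : (Fin n → ℝ) → ℝ := fun z => ∑ k ∈ Finset.range (m+1),
      ((Nat.factorial k : ℝ)⁻¹) * iteratedFDeriv ℝ k g (x, x) (fun _ => ((0:Fin n → ℝ), ε • z)) with hpdef
  have hpcont : Continuous p :=
    continuous_finset_sum _ fun k _ => continuous_const.mul (hDcont k)
  have hgc : Continuous fun z : Fin n → ℝ => g (x, x + ε • z) :=
    hgi.continuous.comp (continuous_const.prodMk (continuous_const.add (continuous_id.const_smul ε)))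
  -- Taylor estimate
  have hgrw : ∀ z : Fin n → ℝ,
      ((x, x) : (Fin n → ℝ) × (Fin n → ℝ)) + ((0:Fin n → ℝ), ε • z) = (x, x + ε • z) := by
    intro z
    refine Prod.ext (by simp) (by simp)
  have hTay : ∀ z : Fin n → ℝ, ‖z‖ ≤ R →
      |g (x, x + ε • z) - p z| ≤ M * (ε * R)^(m+1) := by
    intro z hz
    have hεz : ‖ε • z‖ ≤ ε * R := by
      rw [norm_smul, Real.norm_eq_abs, abs_of_pos hε0]
      exact mul_le_mul_of_nonneg_left hz hε0.le
    have hsub : ∀ t : ℝ, t ∈ Icc (0:ℝ) 1 →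
        ((x, x) : (Fin n → ℝ) × (Fin n → ℝ)) + t • ((0:Fin n → ℝ), ε • z) ∈ S := by
      intro t ht
      refine ⟨(x, t • (ε • z)), ⟨hx, ?_⟩, ?_⟩
      · rw [Metric.mem_closedBall, dist_zero_right, norm_smul, Real.norm_eq_abs,
          abs_of_nonneg ht.1]
        calc t * ‖ε • z‖ ≤ 1 * (ε * R) :=
              mul_le_mul ht.2 hεz (norm_nonneg _) zero_le_one
          _ ≤ 1 * (1 * R) := by
              rw [one_mul, one_mul]
              exact mul_le_mul_of_nonneg_right hε1 hR.le
          _ = R := by ring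
      · refine Prod.ext (by simp) (by simp)
    have hMt : ∀ t ∈ Icc (0:ℝ) 1,
        |iteratedFDeriv ℝ (m+1) g (((x, x) : (Fin n → ℝ) × (Fin n → ℝ))
            + t • ((0:Fin n → ℝ), ε • z)) (fun _ => ((0:Fin n → ℝ), ε • z))|
          ≤ M * (ε * R)^(m+1) := by
      intro t ht
      have h1 := (iteratedFDeriv ℝ (m+1) g (((x, x) : (Fin n → ℝ) × (Fin n → ℝ))
            + t • ((0:Fin n → ℝ), ε • z))).le_opNorm (fun _ : Fin (m+1) => ((0:Fin n → ℝ), ε • z))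
      rw [Real.norm_eq_abs] at h1
      refine h1.trans ?_
      have h2 : (∏ _j : Fin (m+1), ‖((0:Fin n → ℝ), ε • z)‖) = ‖((0:Fin n → ℝ), ε • z)‖^(m+1) := by
        rw [Finset.prod_const, Finset.card_univ, Fintype.card_fin]
      rw [h2]
      have h3 : ‖((0:Fin n → ℝ), ε • z)‖ ≤ ε * R := by
        rw [Prod.norm_def]
        simp only [norm_zero]
        rw [max_eq_right (norm_nonneg _)]
        exact hεz
      exact mul_le_mul (hMb (m+1) le_rfl _ (hsub t ht))
        (pow_le_pow_left₀ (norm_nonneg _) h3 (m+1)) (by positivity) hM0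
    have := taylor_bound_line hgi m (x, x) ((0:Fin n → ℝ), ε • z) hMt
    rw [hgrw z] at this
    exact this
  -- splitting the integral
  have hint1 : Integrable (fun z => (g (x, x + ε • z) - p z) * ψ z) := hInt _ (hgc.sub hpcont)
  have hint2 : Integrable (fun z => p z * ψ z) := hInt _ hpcont
  have hsplit : (∫ z, g (x, x + ε • z) * ψ z)
      = (∫ z, (g (x, x + ε • z) - p z) * ψ z) + ∫ z, p z * ψ z := by
    rw [← integral_add hint1 hint2]
    congr 1; funext z; ring
  -- the remainder bound
  have hrem : |∫ z, (g (x, x + ε • z) - p z) * ψ z| ≤ M * R^(m+1) * C₀ * ε^(m+1) := by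
    have hb : ∀ z, |(g (x, x + ε • z) - p z) * ψ z| ≤ (M * (ε * R)^(m+1)) * |ψ z| := by
      intro z
      rw [abs_mul]
      by_cases hz : ψ z = 0
      · simp [hz]
      · have hzb : ‖z‖ ≤ R := by
          have := hψs (Function.mem_support.mpr hz)
          simpa [Metric.mem_closedBall, dist_zero_right] using this
        exact mul_le_mul_of_nonneg_right (hTay z hzb) (abs_nonneg _)
    have h1 : |∫ z, (g (x, x + ε • z) - p z) * ψ z|
        ≤ ∫ z, |(g (x, x + ε • z) - p z) * ψ z| := by
      have := norm_integral_le_integral_norm (μ := volume)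
        (f := fun z => (g (x, x + ε • z) - p z) * ψ z)
      simpa only [Real.norm_eq_abs] using this
    have h2 : (∫ z, |(g (x, x + ε • z) - p z) * ψ z|)
        ≤ ∫ z, (M * (ε * R)^(m+1)) * |ψ z| :=
      integral_mono hint1.abs (hIψ.abs.const_mul _) hb
    have h3 : (∫ z, (M * (ε * R)^(m+1)) * |ψ z|)
        = (M * (ε * R)^(m+1)) * ∫ z, |ψ z| := integral_const_mul _ _
    have h4 : (M * (ε * R)^(m+1)) * (∫ z, |ψ z|) ≤ (M * (ε * R)^(m+1)) * C₀ :=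
      mul_le_mul_of_nonneg_left (hL1 ε ⟨hε0, hε1⟩ x hx) (by positivity)
    calc |∫ z, (g (x, x + ε • z) - p z) * ψ z|
        ≤ (M * (ε * R)^(m+1)) * C₀ := h1.trans (h2.trans (h3.le.trans h4))
      _ = M * R^(m+1) * C₀ * ε^(m+1) := by rw [mul_pow]; ring
  -- the polynomial bound
  have hpoly : |∫ z, p z * ψ z|
      ≤ (∑ k ∈ Finset.range (m+1), (n:ℝ)^k) * (M * C₁) * ε^(m+1) := by
    have hswap : (∫ z, p z * ψ z)
        = ∑ k ∈ Finset.range (m+1), ((Nat.factorial k : ℝ)⁻¹ *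
            ∫ z, iteratedFDeriv ℝ k g (x, x) (fun _ => ((0:Fin n → ℝ), ε • z)) * ψ z) := by
      have e1 : (fun z => p z * ψ z) = fun z => ∑ k ∈ Finset.range (m+1),
          ((Nat.factorial k : ℝ)⁻¹ * iteratedFDeriv ℝ k g (x, x) (fun _ => ((0:Fin n → ℝ), ε • z))) * ψ z := by
        funext z
        rw [hpdef, Finset.sum_mul]
      rw [e1, integral_finset_sum _ (fun k _ => (hInt _ (continuous_const.mul (hDcont k)) : Integrable (fun z => ((Nat.factorial k : ℝ)⁻¹ * iteratedFDeriv ℝ k g (x, x) (fun _ => ((0:Fin n → ℝ), ε • z))) * ψ z)))]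
      refine Finset.sum_congr rfl fun k _ => ?_
      rw [← integral_const_mul]
      congr 1; funext z; ring
    rw [hswap]
    have hkterm : ∀ k ∈ Finset.range (m+1),
        |(Nat.factorial k : ℝ)⁻¹ * ∫ z, iteratedFDeriv ℝ k g (x, x)
            (fun _ => ((0:Fin n → ℝ), ε • z)) * ψ z|
          ≤ (n:ℝ)^k * (M * C₁) * ε^(m+1) := by
      intro k hk
      have hkm : k ≤ m := Nat.lt_succ_iff.mp (Finset.mem_range.mp hk)
      rcases Nat.eq_zero_or_pos k with rfl | hk1
      · have h0 : ∀ z : Fin n → ℝ,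
            iteratedFDeriv ℝ 0 g (x, x) (fun _ => ((0:Fin n → ℝ), ε • z)) = 0 := fun z => by
          rw [iteratedFDeriv_zero_apply, hg0]
        simp only [h0, zero_mul, integral_zero, mul_zero, abs_zero]
        positivity
      · -- expand the derivative into monomials
        have hDint : (∫ z, iteratedFDeriv ℝ k g (x, x) (fun _ => ((0:Fin n → ℝ), ε • z)) * ψ z)
            = ∑ ι : Fin k → Fin n, (ε ^ k * iteratedFDeriv ℝ k g (x, x) (fun j => u (ι j))) *
                ∫ z, ψ z * ∏ i, z i ^ (Finset.univ.filter (fun j => ι j = i)).card := by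
          have e2 : (fun z => iteratedFDeriv ℝ k g (x, x) (fun _ => ((0:Fin n → ℝ), ε • z)) * ψ z)
              = fun z => ∑ ι : Fin k → Fin n,
                  (ε ^ k * iteratedFDeriv ℝ k g (x, x) (fun j => u (ι j))) *
                    (ψ z * ∏ i, z i ^ (Finset.univ.filter (fun j => ι j = i)).card) := by
            funext z
            rw [hexpand k z, Finset.sum_mul]
            refine Finset.sum_congr rfl fun ι _ => ?_
            rw [← hmono k ι z]
            ring
          rw [e2, integral_finset_sum _ (fun ι _ =>
            (((hψc.mul (continuous_finset_prod _ fun i _ =>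
                (continuous_apply i).pow _)).integrable_of_hasCompactSupport
              hψcs.mul_right).const_mul _ : Integrable (fun z => (ε ^ k * iteratedFDeriv ℝ k g (x, x) (fun j => u (ι j))) *
                      (ψ z * ∏ i, z i ^ (Finset.univ.filter (fun j => ι j = i)).card))))]
          refine Finset.sum_congr rfl fun ι _ => integral_const_mul _ _
        rw [hDint]
        have hmom' : ∀ ι : Fin k → Fin n,
            |∫ z, ψ z * ∏ i, z i ^ (Finset.univ.filter (fun j => ι j = i)).card|
              ≤ C₁ * ε ^ (m + 1 - k) := by
          intro ι
          have := hmom ε ⟨hε0, hε1⟩ x hx (fun i => (Finset.univ.filter (fun j => ι j = i)).card)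
            (by rw [hcard k ι]; exact hk1) (by rw [hcard k ι]; exact hkm)
          rw [hcard k ι] at this
          exact this
        have hterm : ∀ ι : Fin k → Fin n,
            |(ε ^ k * iteratedFDeriv ℝ k g (x, x) (fun j => u (ι j))) *
              ∫ z, ψ z * ∏ i, z i ^ (Finset.univ.filter (fun j => ι j = i)).card|
            ≤ M * C₁ * ε^(m+1) := by
          intro ι
          rw [abs_mul, abs_mul]
          have hεk : |ε ^ k| = ε ^ k := abs_of_pos (pow_pos hε0 k)
          rw [hεk]
          calc ε ^ k * |iteratedFDeriv ℝ k g (x, x) (fun j => u (ι j))| *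
                |∫ z, ψ z * ∏ i, z i ^ (Finset.univ.filter (fun j => ι j = i)).card|
              ≤ ε ^ k * M * (C₁ * ε ^ (m + 1 - k)) := by
                refine mul_le_mul ?_ (hmom' ι) (abs_nonneg _) (by positivity)
                exact mul_le_mul_of_nonneg_left (hTle k (hkm.trans (Nat.le_succ m)) ι)
                  (by positivity)
            _ = M * C₁ * (ε ^ k * ε ^ (m + 1 - k)) := by ring
            _ = M * C₁ * ε^(m+1) := by
                rw [← pow_add, Nat.add_sub_cancel' (hkm.trans (Nat.le_succ m))]
        calc |(Nat.factorial k : ℝ)⁻¹ * ∑ ι : Fin k → Fin n,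
              (ε ^ k * iteratedFDeriv ℝ k g (x, x) (fun j => u (ι j))) *
                ∫ z, ψ z * ∏ i, z i ^ (Finset.univ.filter (fun j => ι j = i)).card|
            ≤ |∑ ι : Fin k → Fin n,
              (ε ^ k * iteratedFDeriv ℝ k g (x, x) (fun j => u (ι j))) *
                ∫ z, ψ z * ∏ i, z i ^ (Finset.univ.filter (fun j => ι j = i)).card| := by
              rw [abs_mul]
              have : |(Nat.factorial k : ℝ)⁻¹| ≤ 1 := by
                rw [abs_of_nonneg (by positivity)]
                exact inv_le_one_of_one_le₀ (by exact_mod_cast k.factorial_pos)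
              exact mul_le_of_le_one_left (abs_nonneg _) this
          _ ≤ ∑ ι : Fin k → Fin n, (M * C₁ * ε^(m+1)) :=
              (Finset.abs_sum_le_sum_abs _ _).trans (Finset.sum_le_sum fun ι _ => hterm ι)
          _ = (n:ℝ)^k * (M * C₁) * ε^(m+1) := by
              rw [Finset.sum_const, Finset.card_univ]
              simp [Fintype.card_fun]
              ring
    calc |∑ k ∈ Finset.range (m+1), ((Nat.factorial k : ℝ)⁻¹ *
            ∫ z, iteratedFDeriv ℝ k g (x, x) (fun _ => ((0:Fin n → ℝ), ε • z)) * ψ z)|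
        ≤ ∑ k ∈ Finset.range (m+1), (n:ℝ)^k * (M * C₁) * ε^(m+1) :=
          (Finset.abs_sum_le_sum_abs _ _).trans (Finset.sum_le_sum hkterm)
      _ = (∑ k ∈ Finset.range (m+1), (n:ℝ)^k) * (M * C₁) * ε^(m+1) := by
          rw [← Finset.sum_mul, ← Finset.sum_mul]
  -- put everything together
  calc |∫ z, g (x, x + ε • z) * ψ z|
      ≤ |∫ z, (g (x, x + ε • z) - p z) * ψ z| + |∫ z, p z * ψ z| := by
        rw [hsplit]; exact abs_add_le _ _
    _ ≤ M * R^(m+1) * C₀ * ε^(m+1)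
        + (∑ k ∈ Finset.range (m+1), (n:ℝ)^k) * (M * C₁) * ε^(m+1) := add_le_add hrem hpoly
    _ = A * ε^(m+1) := by rw [hAdef]; ring
    _ ≤ (A + 1) * ε^(m+1) := by
        have : (0:ℝ) ≤ ε^(m+1) := by positivity
        nlinarith
end
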